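/- arXiv:1210.3279 — 6 statements merged into one kernel-verified Lean document; each statement's English description precedes it below -/
import Mathlib

section
/- (Weak duality for the learning graph programs.) For every certificate structure C on n variables, every primal-feasible solution (w, p) for C, and every dual-feasible solution α for C, one has Σ_{M∈C} α_∅(M)² ≤ Σ_{e∈E} w_e. -/
/-- A primal-feasible solution for the learning graph program of a certificate
structure `C` on `n` variables.  Arcs are encoded as pairs `(S, j)` with `j ∉ S`,
representing the arc from `S` to `S ∪ {j}`. -/
def PrimalFeasible (n : ℕ) (C : Finset (Finset (Finset (Fin n))))
    (w : Finset (Fin n) → Fin n → ℝ)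
    (p : Finset (Fin n) → Fin n → Finset (Finset (Fin n)) → ℝ) : Prop :=
  (∀ (S : Finset (Fin n)), ∀ j ∉ S, 0 ≤ w S j) ∧
  (∀ (S : Finset (Fin n)), ∀ j ∉ S, ∀ M ∈ C, w S j = 0 → p S j M = 0) ∧
  (∀ M ∈ C, ∑ S : Finset (Fin n), ∑ j ∈ Sᶜ, (p S j M) ^ 2 / w S j ≤ 1) ∧
  (∀ M ∈ C, ∀ S : Finset (Fin n), S ∉ M → S ≠ ∅ →
    ∑ j ∈ S, p (S.erase j) j M = ∑ j ∈ Sᶜ, p S j M) ∧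
  (∀ M ∈ C, ∑ j : Fin n, p ∅ j M = 1)

/-- A dual-feasible solution for the learning graph program of a certificate
structure `C` on `n` variables. -/
def DualFeasible (n : ℕ) (C : Finset (Finset (Finset (Fin n))))
    (α : Finset (Fin n) → Finset (Finset (Fin n)) → ℝ) : Prop :=
  (∀ (S : Finset (Fin n)), ∀ j ∉ S,
      ∑ M ∈ C, (α S M - α (insert j S) M) ^ 2 ≤ 1) ∧
  (∀ (S : Finset (Fin n)), ∀ M ∈ C, S ∈ M → α S M = 0)

/-!
A unit flow `p` from `∅` into the certificate `M` pairs with any `α` vanishing on `M` by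
summation by parts: `α ∅ = ∑ₑ pₑ (α (s e) - α (t e))`, since the divergence of `p` is `1` at `∅`
and `0` off `M`. Cauchy–Schwarz with weights `w` bounds `α ∅ ^ 2` by
`(∑ₑ pₑ² / wₑ) (∑ₑ wₑ (α (s e) - α (t e))²)`, the first factor being at most `1`. Summing over
`M ∈ C` and using the dual constraint on each arc gives `∑ₑ wₑ`.
-/

open Finset

theorem sq_sum_mul_le_sum_sq_div_mul_sum_mul_sq {R ι : Type*} [Field R] [LinearOrder R]
    [IsStrictOrderedRing R] (s : Finset ι) {w p a : ι → R}
    (hw : ∀ i ∈ s, 0 ≤ w i) (hp : ∀ i ∈ s, w i = 0 → p i = 0) :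
    (∑ i ∈ s, p i * a i) ^ 2 ≤ (∑ i ∈ s, p i ^ 2 / w i) * ∑ i ∈ s, w i * a i ^ 2 := by
  refine sum_sq_le_sum_mul_sum_of_sq_le_mul s (fun i hi => div_nonneg (sq_nonneg _) (hw i hi))
    (fun i hi => mul_nonneg (hw i hi) (sq_nonneg _)) fun i hi => le_of_eq ?_
  rcases eq_or_ne (w i) 0 with h0 | h0
  · simp [hp i hi h0]
  · field_simp

section Hypercube

variable {ι : Type*} [Fintype ι] [DecidableEq ι]

theorem sum_sum_compl_insert_eq_sum_sum_erase {M : Type*} [AddCommMonoid M]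
    (g : Finset ι → Finset ι → ι → M) :
    ∑ S, ∑ j ∈ Sᶜ, g S (insert j S) j = ∑ T, ∑ j ∈ T, g (T.erase j) T j := by
  rw [sum_sigma', sum_sigma']
  refine sum_nbij' (fun x => ⟨insert x.2 x.1, x.2⟩) (fun x => ⟨x.1.erase x.2, x.2⟩)
    ?_ ?_ ?_ ?_ ?_ <;> rintro ⟨S, j⟩ hj <;>
    simp only [mem_sigma, mem_univ, mem_compl, true_and] at hj ⊢
  · exact mem_insert_self j S
  · exact notMem_erase j S
  · rw [erase_insert hj]
  · rw [insert_erase hj]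
  · rw [erase_insert hj]

section CommRing

variable {R : Type*} [CommRing R]

def netOutflow (p : Finset ι → ι → R) (S : Finset ι) : R :=
  ∑ j ∈ Sᶜ, p S j - ∑ j ∈ S, p (S.erase j) j

theorem sum_mul_sub_eq_sum_netOutflow_mul (p : Finset ι → ι → R) (α : Finset ι → R) :
    ∑ S, ∑ j ∈ Sᶜ, p S j * (α S - α (insert j S)) = ∑ S, netOutflow p S * α S := by
  have hin := sum_sum_compl_insert_eq_sum_sum_erase fun S T j => p S j * α T
  simp only [mul_sub, sum_sub_distrib, hin, netOutflow, sub_mul, sum_mul]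

theorem sum_mul_sub_eq_of_unit_flow {M : Finset (Finset ι)} {p : Finset ι → ι → R}
    {α : Finset ι → R}
    (hflow : ∀ S, S ∉ M → S ≠ ∅ → ∑ j ∈ S, p (S.erase j) j = ∑ j ∈ Sᶜ, p S j)
    (hsource : ∑ j, p ∅ j = 1) (hα : ∀ S ∈ M, α S = 0) :
    ∑ S, ∑ j ∈ Sᶜ, p S j * (α S - α (insert j S)) = α ∅ := by
  rw [sum_mul_sub_eq_sum_netOutflow_mul, sum_eq_single_of_mem ∅ (mem_univ _)]
  · simp [netOutflow, hsource]
  · intro S _ hS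
    by_cases hSM : S ∈ M
    · rw [hα S hSM, mul_zero]
    · rw [netOutflow, hflow S hSM hS, sub_self, zero_mul]

end CommRing

theorem sq_le_sum_mul_sq_sub_of_unit_flow {R : Type*} [Field R] [LinearOrder R]
    [IsStrictOrderedRing R] {M : Finset (Finset ι)} {w p : Finset ι → ι → R}
    {α : Finset ι → R} (hw : ∀ S, ∀ j ∉ S, 0 ≤ w S j) (hpw : ∀ S, ∀ j ∉ S, w S j = 0 → p S j = 0)
    (henergy : ∑ S, ∑ j ∈ Sᶜ, p S j ^ 2 / w S j ≤ 1)
    (hflow : ∀ S, S ∉ M → S ≠ ∅ → ∑ j ∈ S, p (S.erase j) j = ∑ j ∈ Sᶜ, p S j)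
    (hsource : ∑ j, p ∅ j = 1) (hα : ∀ S ∈ M, α S = 0) :
    α ∅ ^ 2 ≤ ∑ S, ∑ j ∈ Sᶜ, w S j * (α S - α (insert j S)) ^ 2 := by
  have hCS := sq_sum_mul_le_sum_sq_div_mul_sum_mul_sq (univ.sigma fun S : Finset ι => Sᶜ)
    (w := fun e => w e.1 e.2) (p := fun e => p e.1 e.2) (a := fun e => α e.1 - α (insert e.2 e.1))
    (fun e he => hw e.1 e.2 (by simpa using he)) (fun e he => hpw e.1 e.2 (by simpa using he))
  simp only [sum_sigma] at hCS
  rw [sum_mul_sub_eq_of_unit_flow hflow hsource hα] at hCS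
  have hnonneg : 0 ≤ ∑ S, ∑ j ∈ Sᶜ, w S j * (α S - α (insert j S)) ^ 2 :=
    sum_nonneg fun S _ => sum_nonneg fun j hj =>
      mul_nonneg (hw S j (mem_compl.1 hj)) (sq_nonneg _)
  exact hCS.trans (mul_le_of_le_one_left hnonneg henergy)

end Hypercube

theorem learning_graph_weak_duality_general (n : ℕ) (C : Finset (Finset (Finset (Fin n))))
    (w : Finset (Fin n) → Fin n → ℝ)
    (p : Finset (Fin n) → Fin n → Finset (Finset (Fin n)) → ℝ)
    (hwp : PrimalFeasible n C w p)
    (α : Finset (Fin n) → Finset (Finset (Fin n)) → ℝ)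
    (hα : DualFeasible n C α) :
    ∑ M ∈ C, (α ∅ M) ^ 2 ≤ ∑ S : Finset (Fin n), ∑ j ∈ Sᶜ, w S j := by
  obtain ⟨hw, hpw, henergy, hflow, hsource⟩ := hwp
  obtain ⟨hgap, hvanish⟩ := hα
  calc ∑ M ∈ C, α ∅ M ^ 2
      ≤ ∑ M ∈ C, ∑ S, ∑ j ∈ Sᶜ, w S j * (α S M - α (insert j S) M) ^ 2 :=
        sum_le_sum fun M hM => sq_le_sum_mul_sq_sub_of_unit_flow hw
          (fun S j hj => hpw S j hj M hM) (henergy M hM) (hflow M hM) (hsource M hM)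
          (fun S hS => hvanish S M hM hS)
    _ = ∑ S, ∑ j ∈ Sᶜ, w S j * ∑ M ∈ C, (α S M - α (insert j S) M) ^ 2 := by
        simp only [mul_sum]
        rw [sum_comm]
        exact sum_congr rfl fun S _ => sum_comm
    _ ≤ ∑ S, ∑ j ∈ Sᶜ, w S j := by
        gcongr with S _ j hj
        rw [mem_compl] at hj
        exact mul_le_of_le_one_right (hw S j hj) (hgap S j hj)

/-- Weak duality for the learning graph programs. -/
theorem learning_graph_weak_duality (n : ℕ) (C : Finset (Finset (Finset (Fin n))))
    (hCne : C.Nonempty)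
    (hMne : ∀ M ∈ C, M.Nonempty)
    (hMup : ∀ M ∈ C, ∀ S ∈ M, ∀ S' : Finset (Fin n), S ⊆ S' → S' ∈ M)
    (w : Finset (Fin n) → Fin n → ℝ)
    (p : Finset (Fin n) → Fin n → Finset (Finset (Fin n)) → ℝ)
    (hwp : PrimalFeasible n C w p)
    (α : Finset (Fin n) → Finset (Finset (Fin n)) → ℝ)
    (hα : DualFeasible n C α) :
    ∑ M ∈ C, (α ∅ M) ^ 2 ≤ ∑ S : Finset (Fin n), ∑ j ∈ Sᶜ, w S j :=
  learning_graph_weak_duality_general n C w p hwp α hα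
end

section
/- For each fixed integer k ≥ 1 there exists a constant c > 0 such that for every n ≥ k, the k-subset certificate structure on n variables admits a dual-feasible solution whose objective value is at least c·n^{k/(k+1)}. -/
/-- The `k`-subset certificate structure on `n` variables: for every
`A ⊆ [n]` with `|A| = k`, the member `M_A = {S : A ⊆ S}`. -/
def kSubsetCert (n k : ℕ) : Finset (Finset (Finset (Fin n))) :=
  (Finset.univ.filter fun A : Finset (Fin n) => A.card = k).image
    fun A => Finset.univ.filter fun S : Finset (Fin n) => A ⊆ S


/-
The dual is a ramp in `|S|`: `α_S(M_A) = ε · max(0, 1 - |S|/t)` unless `A ⊆ S`, where it is `0`.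
Adding `j` to `S` moves the value on each of the at most `C(n,k)` certificates not yet hit by at
most `ε/t`, and by at most `ε` on the newly hit ones, `A = {j} ∪ B` with `B ⊆ S`; there are at most
`C(|S|, k-1) ≤ t^(k-1)` of those while the ramp is nonzero, i.e. while `|S| < t`. So feasibility
needs `ε² (t^(k-1) + n^k / t²) ≤ 1`, and `t = n^(k/(k+1))` balances the two terms. The objective
`C(n,k) ε²` is then of order `n^k / t^(k-1) = t²`.
-/

open Finset

lemma card_filter_subset_insert_not_subset_le {α : Type*} [DecidableEq α]
    (s S : Finset α) (j : α) (k : ℕ) :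
    #{A ∈ powersetCard k s | A ⊆ insert j S ∧ ¬A ⊆ S} ≤ S.card.choose (k - 1) := by
  calc #{A ∈ powersetCard k s | A ⊆ insert j S ∧ ¬A ⊆ S}
      ≤ #((powersetCard (k - 1) S).image (insert j)) := card_le_card fun A hA => ?_
    _ ≤ #(powersetCard (k - 1) S) := card_image_le
    _ = S.card.choose (k - 1) := card_powersetCard _ _
  simp only [mem_filter, mem_powersetCard] at hA
  obtain ⟨⟨-, hcard⟩, hsub, hnot⟩ := hA
  rw [subset_insert_iff] at hsub
  have hj : j ∈ A := by
    by_contra hj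
    exact hnot (erase_eq_of_notMem hj ▸ hsub)
  exact mem_image.2 ⟨A.erase j, mem_powersetCard.2 ⟨hsub, by rw [card_erase_of_mem hj, hcard]⟩,
    insert_erase hj⟩

lemma Nat.pow_le_pow_mul_factorial_mul_choose {n k : ℕ} (hkn : k ≤ n) :
    n ^ k ≤ k ^ k * k.factorial * n.choose k := by
  rcases Nat.eq_zero_or_pos k with rfl | hk
  · simp
  have hn : n ≤ k * (n + 1 - k) := by
    obtain ⟨m, rfl⟩ := Nat.exists_eq_add_of_le hkn
    rw [show k + m + 1 - k = m + 1 by omega]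
    nlinarith
  calc n ^ k ≤ (k * (n + 1 - k)) ^ k := Nat.pow_le_pow_left hn k
    _ = k ^ k * (n + 1 - k) ^ k := mul_pow _ _ _
    _ ≤ k ^ k * n.descFactorial k := Nat.mul_le_mul_left _ (n.pow_sub_le_descFactorial k)
    _ = k ^ k * k.factorial * n.choose k := by
        rw [Nat.descFactorial_eq_factorial_mul_choose, mul_assoc]

lemma Real.rpow_div_add_one_pow_add_one (n k : ℕ) :
    ((n : ℝ) ^ ((k : ℝ) / (k + 1))) ^ (k + 1) = (n : ℝ) ^ k := by
  rw [← Real.rpow_natCast _ (k + 1), ← Real.rpow_mul n.cast_nonneg, ← Real.rpow_natCast]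
  congr 1
  push_cast
  field_simp

section Ramp

noncomputable def ramp (t x : ℝ) : ℝ := max 0 (1 - x / t)

variable {t x : ℝ}

lemma ramp_nonneg : 0 ≤ ramp t x := le_max_left _ _

@[simp] lemma ramp_zero : ramp t 0 = 1 := by simp [ramp]

lemma ramp_le_one (ht : 0 ≤ t) (hx : 0 ≤ x) : ramp t x ≤ 1 :=
  max_le zero_le_one (by linarith [div_nonneg hx ht])

lemma ramp_eq_zero_of_le (ht : 0 < t) (h : t ≤ x) : ramp t x = 0 :=
  max_eq_left (by linarith [(one_le_div ht).2 h])

lemma abs_ramp_sub_ramp_le (ht : 0 < t) (x y : ℝ) : |ramp t x - ramp t y| ≤ |x - y| / t := by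
  unfold ramp
  rw [max_comm 0, max_comm 0]
  calc |max (1 - x / t) 0 - max (1 - y / t) 0| ≤ |(1 - x / t) - (1 - y / t)| :=
        abs_max_sub_max_le_abs _ _ _
    _ = |x - y| / t := by
        rw [show (1 - x / t) - (1 - y / t) = (y - x) / t by ring, abs_div, abs_of_pos ht,
          abs_sub_comm]

end Ramp

section KSubset

variable {n k : ℕ}

def supersets (A : Finset (Fin n)) : Finset (Finset (Fin n)) := {S | A ⊆ S}

@[simp] lemma mem_supersets {A S : Finset (Fin n)} : S ∈ supersets A ↔ A ⊆ S := by
  simp [supersets]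

lemma supersets_injective : Function.Injective (supersets (n := n)) := fun A B hAB =>
  (mem_supersets.1 (hAB ▸ mem_supersets.2 subset_rfl : B ∈ supersets A)).antisymm
    (mem_supersets.1 (hAB ▸ mem_supersets.2 subset_rfl : A ∈ supersets B))

lemma sum_kSubsetCert (f : Finset (Finset (Fin n)) → ℝ) :
    ∑ M ∈ kSubsetCert n k, f M = ∑ A ∈ powersetCard k univ, f (supersets A) := by
  rw [kSubsetCert, ← powerset_univ, ← powersetCard_eq_filter]
  exact sum_image fun _ _ _ _ h => supersets_injective h

lemma card_powersetCard_univ_fin : #(powersetCard k (univ : Finset (Fin n))) = n.choose k := by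
  rw [card_powersetCard, card_univ, Fintype.card_fin]

noncomputable def rampDual (ε t : ℝ) (S : Finset (Fin n)) (M : Finset (Finset (Fin n))) : ℝ :=
  if S ∈ M then 0 else ε * ramp t S.card

lemma rampDual_sub_sq_le {ε t : ℝ} (ht : 0 < t) {S : Finset (Fin n)} {j : Fin n} (hj : j ∉ S)
    (A : Finset (Fin n)) :
    (rampDual ε t S (supersets A) - rampDual ε t (insert j S) (supersets A)) ^ 2 ≤
      if A ⊆ insert j S ∧ ¬A ⊆ S then ε ^ 2 * ramp t S.card ^ 2 else ε ^ 2 / t ^ 2 := by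
  simp only [rampDual, mem_supersets, card_insert_of_notMem hj, Nat.cast_succ]
  by_cases hAS : A ⊆ S
  · simp only [hAS, subset_trans hAS (subset_insert j S), if_true, sub_self, not_true, and_false,
      if_false, ne_eq, OfNat.ofNat_ne_zero, not_false_eq_true, zero_pow]
    positivity
  by_cases hAjS : A ⊆ insert j S
  · simp [hAS, hAjS, mul_pow]
  have hstep : (ramp t S.card - ramp t (S.card + 1)) ^ 2 ≤ 1 / t ^ 2 := by
    have h := abs_ramp_sub_ramp_le ht S.card (S.card + 1)
    rw [sub_add_cancel_left, abs_neg, abs_one] at h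
    simpa [div_pow] using pow_le_pow_left₀ (abs_nonneg _) h 2
  simp only [hAS, hAjS, if_false, false_and, ← mul_sub, mul_pow]
  calc ε ^ 2 * (ramp t S.card - ramp t (S.card + 1)) ^ 2 ≤ ε ^ 2 * (1 / t ^ 2) :=
        mul_le_mul_of_nonneg_left hstep (sq_nonneg ε)
    _ = ε ^ 2 / t ^ 2 := mul_one_div _ _

theorem dualFeasible_rampDual {ε t : ℝ} (ht : 0 < t)
    (h : ε ^ 2 * (t ^ (k - 1) + n.choose k / t ^ 2) ≤ 1) :
    DualFeasible n (kSubsetCert n k) (rampDual ε t) := by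
  refine ⟨fun S j hj => ?_, fun S M _ hS => if_pos hS⟩
  set p : Finset (Fin n) → Prop := fun A => A ⊆ insert j S ∧ ¬A ⊆ S
  have hcross : #{A ∈ powersetCard k univ | p A} * (ε ^ 2 * ramp t S.card ^ 2) ≤
      ε ^ 2 * t ^ (k - 1) := by
    rcases le_or_gt t S.card with hSt | hSt
    · rw [ramp_eq_zero_of_le ht hSt]
      simp only [ne_eq, OfNat.ofNat_ne_zero, not_false_eq_true, zero_pow, mul_zero]
      positivity
    have hcount : (#{A ∈ powersetCard k univ | p A} : ℝ) ≤ t ^ (k - 1) :=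
      calc (#{A ∈ powersetCard k univ | p A} : ℝ) ≤ S.card.choose (k - 1) := by
            exact_mod_cast card_filter_subset_insert_not_subset_le _ S j k
        _ ≤ (S.card : ℝ) ^ (k - 1) := by exact_mod_cast Nat.choose_le_pow _ _
        _ ≤ t ^ (k - 1) := pow_le_pow_left₀ (Nat.cast_nonneg _) hSt.le _
    have hramp : ramp t S.card ^ 2 ≤ 1 :=
      pow_le_one₀ ramp_nonneg (ramp_le_one ht.le (Nat.cast_nonneg _))
    calc _ ≤ t ^ (k - 1) * (ε ^ 2 * 1) :=
          mul_le_mul hcount (mul_le_mul_of_nonneg_left hramp (sq_nonneg ε)) (by positivity)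
            (by positivity)
      _ = ε ^ 2 * t ^ (k - 1) := by ring
  have hrest : #{A ∈ powersetCard k univ | ¬p A} * (ε ^ 2 / t ^ 2) ≤
      n.choose k * (ε ^ 2 / t ^ 2) := by
    gcongr
    exact_mod_cast card_powersetCard_univ_fin (k := k) ▸ card_filter_le _ _
  calc ∑ M ∈ kSubsetCert n k, (rampDual ε t S M - rampDual ε t (insert j S) M) ^ 2
      ≤ ∑ A ∈ powersetCard k univ,
          if p A then ε ^ 2 * ramp t S.card ^ 2 else ε ^ 2 / t ^ 2 := by
        rw [sum_kSubsetCert]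
        exact sum_le_sum fun A _ => rampDual_sub_sq_le ht hj A
    _ = #{A ∈ powersetCard k univ | p A} * (ε ^ 2 * ramp t S.card ^ 2) +
          #{A ∈ powersetCard k univ | ¬p A} * (ε ^ 2 / t ^ 2) := by
        rw [sum_ite, sum_const, sum_const, nsmul_eq_mul, nsmul_eq_mul]
    _ ≤ ε ^ 2 * t ^ (k - 1) + n.choose k * (ε ^ 2 / t ^ 2) := add_le_add hcross hrest
    _ = ε ^ 2 * (t ^ (k - 1) + n.choose k / t ^ 2) := by ring
    _ ≤ 1 := h

lemma sum_sq_rampDual_empty (hk : k ≠ 0) (ε t : ℝ) :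
    ∑ M ∈ kSubsetCert n k, rampDual ε t ∅ M ^ 2 = n.choose k * ε ^ 2 := by
  rw [sum_kSubsetCert, ← card_powersetCard_univ_fin, ← nsmul_eq_mul, ← sum_const]
  refine sum_congr rfl fun A hA => ?_
  have hne : A.Nonempty := card_pos.1 ((mem_powersetCard.1 hA).2 ▸ Nat.pos_of_ne_zero hk)
  simp [rampDual, hne.ne_empty]

theorem exists_dualFeasible_kSubsetCert (hk : k ≠ 0) (hkn : k ≤ n) {t : ℝ}
    (ht : 0 < t) (htn : t ^ (k + 1) = n ^ k) :
    ∃ α, DualFeasible n (kSubsetCert n k) α ∧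
      t ^ 2 / (2 * (k ^ k * k.factorial)) ≤ ∑ M ∈ kSubsetCert n k, α ∅ M ^ 2 := by
  have hpow : t ^ (k + 1) = t ^ (k - 1) * t ^ 2 := by rw [← pow_add]; congr 1; omega
  have hupper : (n.choose k : ℝ) ≤ t ^ (k + 1) := htn ▸ mod_cast Nat.choose_le_pow n k
  have hlower : t ^ (k + 1) ≤ k ^ k * k.factorial * n.choose k :=
    htn ▸ mod_cast Nat.pow_le_pow_mul_factorial_mul_choose hkn
  set ε := (√(2 * t ^ (k - 1)))⁻¹
  have hε : ε ^ 2 = (2 * t ^ (k - 1))⁻¹ := by rw [inv_pow, Real.sq_sqrt (by positivity)]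
  refine ⟨rampDual ε t, dualFeasible_rampDual ht ?_, ?_⟩
  · rw [hε, inv_mul_le_iff₀ (by positivity), mul_one, two_mul, add_le_add_iff_left,
      div_le_iff₀ (by positivity)]
    linarith
  · rw [sum_sq_rampDual_empty hk, hε, ← div_eq_mul_inv, div_le_div_iff₀ (by positivity)
      (by positivity)]
    linarith

end KSubset

/-- The `k`-subset certificate structure admits a dual-feasible solution of
objective value `Ω(n^{k/(k+1)})`. -/
theorem kSubset_dual_lower_bound (k : ℕ) (hk : 1 ≤ k) :
    ∃ c : ℝ, 0 < c ∧ ∀ n : ℕ, k ≤ n →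
      ∃ α : Finset (Fin n) → Finset (Finset (Fin n)) → ℝ,
        DualFeasible n (kSubsetCert n k) α ∧
        c * (n : ℝ) ^ ((k : ℝ) / ((k : ℝ) + 1)) ≤
          Real.sqrt (∑ M ∈ kSubsetCert n k, (α ∅ M) ^ 2) := by
  set K : ℝ := 2 * (k ^ k * k.factorial)
  have hK : 0 < K := by positivity
  refine ⟨(√K)⁻¹, by positivity, fun n hkn => ?_⟩
  set t : ℝ := (n : ℝ) ^ ((k : ℝ) / ((k : ℝ) + 1))
  have ht : 0 < t := Real.rpow_pos_of_pos (by exact_mod_cast hk.trans hkn) _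
  obtain ⟨α, hfeas, hobj⟩ := exists_dualFeasible_kSubsetCert (Nat.one_le_iff_ne_zero.1 hk) hkn ht
    (Real.rpow_div_add_one_pow_add_one n k)
  refine ⟨α, hfeas, Real.le_sqrt_of_sq_le ?_⟩
  rwa [mul_pow, inv_pow, Real.sq_sqrt hK.le, inv_mul_eq_div]
end

section
/- Let C be a certificate structure on n variables, let q ≥ 2 be an integer, and for each M ∈ C let X_M ⊆ [q]^n be a non-empty set such that for every non-empty S ⊆ [n] with S ∉ M and every z ∈ [q]^S, the number of x ∈ X_M with x_S = z equals |X_M|/q^{|S|}. Let α_S(M) be real numbers with α_S(M) = 0 whenever S ∈ M, and let Y ⊆ [q]^n. Let Γ be the real matrix with rows indexed by X = {(x,M) : M ∈ C, x ∈ X_M} and columns indexed by Y, with entries Γ[(x,M), y] = sqrt(q^n/|X_M|)·Σ_{S⊆[n]} α_S(M)·E_S[x,y]. Then ‖Γ‖ ≥ sqrt((|Y|/q^n)·Σ_{M∈C} α_∅(M)²). -/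
/-!
Test `Γ` against `u (x, M) = α ∅ M / √|X_M|` and the all-ones vector on `Y`. For `S ≠ ∅` with
`S ∉ M`, every subset of `S` is also outside `M` (upward closure), so `X_M` is balanced on all of
them; expanding `∏_{j∈S} ([x_j = y_j] - 1/q)` over subsets of `S` then turns the column sum
`∑_{x ∈ X_M} E_S[x,y]` into `|X_M| ∏_{j∈S} (1/q - 1/q) = 0`. Since `α S M = 0` for `S ∈ M`, only
`S = ∅` survives: `⟪u, Γ 1⟫ = |Y| ∑_M (α ∅ M)² / √(q^n)`, while `‖u‖² = ∑_M (α ∅ M)²` and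
`‖1‖² = |Y|`.
-/

/-- The projector matrices `E_S` on `[q]^n`:
`E_S[x,y] = Π_{j∈S} ([x_j = y_j] − 1/q) · Π_{j∉S} (1/q)`. -/
noncomputable def ES (q n : ℕ) (S : Finset (Fin n)) :
    Matrix (Fin n → Fin q) (Fin n → Fin q) ℝ :=
  Matrix.of fun x y => ∏ j : Fin n,
    if j ∈ S then ((if x j = y j then 1 else 0) - 1 / q) else (1 / q : ℝ)

/-- The spectral (`ℓ₂ → ℓ₂` operator) norm of a matrix. -/
noncomputable def specNorm {𝕜 : Type*} [RCLike 𝕜] {m l : Type*} [Fintype m] [Fintype l]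
    [DecidableEq l] (A : Matrix m l 𝕜) : ℝ :=
  ‖LinearMap.toContinuousLinearMap (Matrix.toEuclideanLin A)‖

open Finset

theorem sum_prod_ite_eq_sub_eq_zero {ι κ : Type*} [DecidableEq ι] [DecidableEq κ]
    (X : Finset (ι → κ)) (y : ι → κ) {S : Finset ι} (hS : S.Nonempty) (p : ℝ)
    (hX : ∀ T ⊆ S, (#{x ∈ X | ∀ j ∈ T, x j = y j} : ℝ) = #X * p ^ #T) :
    ∑ x ∈ X, ∏ j ∈ S, ((if x j = y j then 1 else 0) - p) = 0 := by
  calc ∑ x ∈ X, ∏ j ∈ S, ((if x j = y j then 1 else 0) - p)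
      = ∑ T ∈ S.powerset, ∑ x ∈ X,
          (if ∀ j ∈ T, x j = y j then 1 else 0) * (-p) ^ #(S \ T) := by
        rw [sum_comm]
        simp_rw [sub_eq_add_neg, prod_add, prod_boole, prod_const]
    _ = ∑ T ∈ S.powerset, #X * ((∏ _j ∈ T, p) * ∏ _j ∈ S \ T, -p) := by
        refine sum_congr rfl fun T hT => ?_
        rw [← sum_mul, sum_boole, hX T (mem_powerset.1 hT), prod_const, prod_const]
        ring
    _ = #X * ∏ _j ∈ S, (p + -p) := by rw [← mul_sum, prod_add]
    _ = 0 := by simp [hS.ne_empty]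

theorem ES_eq_prod_mul (q n : ℕ) (S : Finset (Fin n)) (x y : Fin n → Fin q) :
    ES q n S x y = (∏ j ∈ S, ((if x j = y j then 1 else 0) - 1 / (q : ℝ))) * (1 / q : ℝ) ^ #Sᶜ := by
  rw [ES, Matrix.of_apply, prod_ite, prod_const]
  simp [filter_not, compl_eq_univ_sdiff]

theorem ES_empty (q n : ℕ) (x y : Fin n → Fin q) : ES q n ∅ x y = (1 / q : ℝ) ^ n := by
  simp [ES]

theorem sum_ES_eq_zero (q n : ℕ) (X : Finset (Fin n → Fin q)) (y : Fin n → Fin q)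
    {S : Finset (Fin n)} (hS : S.Nonempty)
    (hX : ∀ T ⊆ S, (#{x ∈ X | ∀ j ∈ T, x j = y j} : ℝ) = #X / (q : ℝ) ^ #T) :
    ∑ x ∈ X, ES q n S x y = 0 := by
  simp_rw [ES_eq_prod_mul, ← sum_mul]
  rw [sum_prod_ite_eq_sub_eq_zero X y hS _ fun T hT => by
    rw [one_div_pow, ← div_eq_mul_one_div]; convert hX T hT, zero_mul]

theorem sum_sum_mul_ES_eq (q n : ℕ) (M : Finset (Finset (Fin n)))
    (hM : ∀ S ∈ M, ∀ S' : Finset (Fin n), S ⊆ S' → S' ∈ M) (X : Finset (Fin n → Fin q))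
    (hX : ∀ S : Finset (Fin n), S ≠ ∅ → S ∉ M → ∀ z : {i // i ∈ S} → Fin q,
      (#{x ∈ X | ∀ i : {i // i ∈ S}, x i.1 = z i} : ℝ) = #X / (q : ℝ) ^ #S)
    (α : Finset (Fin n) → ℝ) (hα : ∀ S ∈ M, α S = 0) (y : Fin n → Fin q) :
    ∑ x ∈ X, ∑ S, α S * ES q n S x y = α ∅ * (#X * (1 / q : ℝ) ^ n) := by
  rw [sum_comm, sum_eq_single ∅ ?_ (by simp)]
  · simp [ES_empty, mul_left_comm]
  intro S _ hS
  by_cases hSM : S ∈ M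
  · simp [hα S hSM]
  rw [← mul_sum, sum_ES_eq_zero q n X y (nonempty_iff_ne_empty.2 hS) ?_, mul_zero]
  intro T hTS
  rcases T.eq_empty_or_nonempty with rfl | hT
  · simp
  convert hX T hT.ne_empty (fun hTM => hSM (hM T hTM S hTS)) (fun i => y i) using 3
  simp

theorem sum_sqrt_mul_sum_ES_eq (q n : ℕ) (M : Finset (Finset (Fin n)))
    (hM : ∀ S ∈ M, ∀ S' : Finset (Fin n), S ⊆ S' → S' ∈ M) (X : Finset (Fin n → Fin q))
    (hXne : X.Nonempty)
    (hX : ∀ S : Finset (Fin n), S ≠ ∅ → S ∉ M → ∀ z : {i // i ∈ S} → Fin q,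
      (#{x ∈ X | ∀ i : {i // i ∈ S}, x i.1 = z i} : ℝ) = #X / (q : ℝ) ^ #S)
    (α : Finset (Fin n) → ℝ) (hα : ∀ S ∈ M, α S = 0) (Y : Finset (Fin n → Fin q)) :
    ∑ x ∈ X, α ∅ / √(#X : ℝ) * ∑ y : {y // y ∈ Y}, √((q : ℝ) ^ n / #X) * ∑ S, α S * ES q n S x y =
      α ∅ ^ 2 * #Y / √((q : ℝ) ^ n) := by
  have hX0 : (0 : ℝ) < #X := by exact_mod_cast hXne.card_pos
  simp only [← mul_sum]
  rw [sum_comm]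
  simp only [sum_sum_mul_ES_eq q n M hM X hX α hα, sum_const, card_univ, Fintype.card_coe,
    nsmul_eq_mul]
  rw [Real.sqrt_div' _ hX0.le]
  calc _ = α ∅ ^ 2 * #Y * (#X / (√(#X : ℝ) * √(#X : ℝ))) * (√((q : ℝ) ^ n) / (q : ℝ) ^ n) := by
        ring
    _ = _ := by rw [Real.mul_self_sqrt hX0.le, div_self hX0.ne', Real.sqrt_div_self']; ring

theorem sum_subtype_mem_eq_sum_sum {α β M : Type*} [Fintype α] [Fintype β] [DecidableEq β]
    [AddCommMonoid M] (X : α → Finset β) (f : α × β → M) :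
    ∑ z : {z : α × β // z.2 ∈ X z.1}, f z.1 = ∑ a, ∑ b ∈ X a, f (a, b) := by
  rw [← sum_subtype {z | z.2 ∈ X z.1} (by simp) f, sum_finset_product _ univ X (by simp)]

/-- With `x / 0 = 0` this also holds when `u = 0` or `v = 0`. -/
theorem inner_div_norm_mul_norm_le_specNorm {m l : Type*} [Fintype m] [Fintype l] [DecidableEq l]
    (A : Matrix m l ℝ) (u : EuclideanSpace ℝ m) (v : EuclideanSpace ℝ l) :
    inner ℝ u (A.toEuclideanLin v) / (‖u‖ * ‖v‖) ≤ specNorm A := by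
  have hA : ‖A.toEuclideanLin v‖ ≤ specNorm A * ‖v‖ :=
    (LinearMap.toContinuousLinearMap A.toEuclideanLin).le_opNorm v
  refine div_le_of_le_mul₀ (by positivity) (norm_nonneg _) ?_
  calc inner ℝ u (A.toEuclideanLin v) ≤ ‖u‖ * ‖A.toEuclideanLin v‖ := real_inner_le_norm _ _
    _ ≤ ‖u‖ * (specNorm A * ‖v‖) := by gcongr
    _ = specNorm A * (‖u‖ * ‖v‖) := by ring

theorem norm_toLp_div_sqrt_card {ι β : Type*} [Fintype ι] [Fintype β] [DecidableEq β]
    (X : ι → Finset β) (hX : ∀ i, (X i).Nonempty) (a : ι → ℝ) :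
    ‖(WithLp.toLp 2 fun z : {z : ι × β // z.2 ∈ X z.1} => a z.1.1 / √(#(X z.1.1) : ℝ) :
      EuclideanSpace ℝ _)‖ = √(∑ i, a i ^ 2) := by
  have hX0 (i : ι) : (0 : ℝ) < #(X i) := by exact_mod_cast (hX i).card_pos
  rw [EuclideanSpace.norm_eq]
  simp only [Real.norm_eq_abs, sq_abs, div_pow, Real.sq_sqrt (hX0 _).le]
  rw [sum_subtype_mem_eq_sum_sum X fun p => a p.1 ^ 2 / #(X p.1)]
  simp only [sum_const, nsmul_eq_mul, mul_div_cancel₀ _ (hX0 _).ne']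

theorem inner_toLp_toEuclideanLin_one {m l : Type*} [Fintype m] [Fintype l] [DecidableEq l]
    (A : Matrix m l ℝ) (w : m → ℝ) :
    inner ℝ (WithLp.toLp 2 w : EuclideanSpace ℝ m) (A.toEuclideanLin (WithLp.toLp 2 fun _ => 1)) =
      ∑ i, w i * ∑ j, A i j := by
  simp [PiLp.inner_apply, Matrix.toLpLin_apply, Matrix.mulVec, dotProduct, mul_comm]

theorem gamma_norm_lower_bound_general (n q : ℕ)
    (C : Finset (Finset (Finset (Fin n))))
    (hMup : ∀ M ∈ C, ∀ S ∈ M, ∀ S' : Finset (Fin n), S ⊆ S' → S' ∈ M)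
    (XM : {M // M ∈ C} → Finset (Fin n → Fin q))
    (hXM : ∀ M, (XM M).Nonempty)
    (horth : ∀ (M : {M // M ∈ C}) (S : Finset (Fin n)), S ≠ ∅ → S ∉ M.1 →
      ∀ z : {i // i ∈ S} → Fin q,
        (((XM M).filter fun x => ∀ i : {i // i ∈ S}, x i.1 = z i).card : ℝ) =
          ((XM M).card : ℝ) / (q : ℝ) ^ S.card)
    (α : Finset (Fin n) → {M // M ∈ C} → ℝ)
    (hzero : ∀ (S : Finset (Fin n)) (M : {M // M ∈ C}), S ∈ M.1 → α S M = 0)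
    (Y : Finset (Fin n → Fin q))
    (Γ : Matrix {z : {M // M ∈ C} × (Fin n → Fin q) // z.2 ∈ XM z.1} {y // y ∈ Y} ℝ)
    (hΓ : Γ = Matrix.of fun z y =>
      Real.sqrt ((q : ℝ) ^ n / ((XM z.1.1).card : ℝ)) *
        ∑ S : Finset (Fin n), α S z.1.1 * ES q n S z.1.2 y.1) :
    Real.sqrt (((Y.card : ℝ) / (q : ℝ) ^ n) * ∑ M : {M // M ∈ C}, (α ∅ M) ^ 2) ≤
      specNorm Γ := by
  set c := ∑ M : {M // M ∈ C}, α ∅ M ^ 2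
  let u : EuclideanSpace ℝ {z : {M // M ∈ C} × (Fin n → Fin q) // z.2 ∈ XM z.1} :=
    WithLp.toLp 2 fun z => α ∅ z.1.1 / √(#(XM z.1.1) : ℝ)
  let v : EuclideanSpace ℝ {y // y ∈ Y} := WithLp.toLp 2 fun _ => 1
  have hu : ‖u‖ = √c := norm_toLp_div_sqrt_card XM hXM (α ∅)
  have hv : ‖v‖ = √(#Y : ℝ) := by simp [v, EuclideanSpace.norm_eq]
  have huv : inner ℝ u (Γ.toEuclideanLin v) = c * #Y / √((q : ℝ) ^ n) := by
    rw [inner_toLp_toEuclideanLin_one, hΓ]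
    simp only [Matrix.of_apply]
    rw [sum_subtype_mem_eq_sum_sum XM fun p => α ∅ p.1 / √(#(XM p.1) : ℝ) *
      ∑ y : {y // y ∈ Y}, √((q : ℝ) ^ n / #(XM p.1)) * ∑ S, α S p.1 * ES q n S p.2 y]
    simp only [fun M : {M // M ∈ C} => sum_sqrt_mul_sum_ES_eq q n M.1 (hMup M.1 M.2) (XM M) (hXM M)
      (horth M) (α · M) (hzero · M) Y, ← sum_div, ← sum_mul, c]
  have hcY : c * #Y = (√c * √(#Y : ℝ)) * (√c * √(#Y : ℝ)) := by
    rw [mul_mul_mul_comm, Real.mul_self_sqrt (sum_nonneg fun M _ => sq_nonneg _),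
      Real.mul_self_sqrt (Nat.cast_nonneg _)]
  calc √(#Y / (q : ℝ) ^ n * c) = (√c * √(#Y : ℝ)) / √((q : ℝ) ^ n) := by
        rw [div_mul_eq_mul_div, Real.sqrt_div' _ (by positivity), Real.sqrt_mul (Nat.cast_nonneg _),
          mul_comm]
    _ = inner ℝ u (Γ.toEuclideanLin v) / (‖u‖ * ‖v‖) := by
        rw [huv, hu, hv, hcY, div_right_comm, mul_self_div_self]
    _ ≤ specNorm Γ := inner_div_norm_mul_norm_le_specNorm Γ u v

/-- Lower bound on the spectral norm of the adversary matrix `Γ` built from the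
sets `X_M` with the orthogonality property and a family `α` vanishing on
certificates. -/
theorem gamma_norm_lower_bound (n q : ℕ) (hq : 2 ≤ q)
    (C : Finset (Finset (Finset (Fin n)))) (hCne : C.Nonempty)
    (hMne : ∀ M ∈ C, M.Nonempty)
    (hMup : ∀ M ∈ C, ∀ S ∈ M, ∀ S' : Finset (Fin n), S ⊆ S' → S' ∈ M)
    (XM : {M // M ∈ C} → Finset (Fin n → Fin q))
    (hXM : ∀ M, (XM M).Nonempty)
    (horth : ∀ (M : {M // M ∈ C}) (S : Finset (Fin n)), S ≠ ∅ → S ∉ M.1 →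
      ∀ z : {i // i ∈ S} → Fin q,
        (((XM M).filter fun x => ∀ i : {i // i ∈ S}, x i.1 = z i).card : ℝ) =
          ((XM M).card : ℝ) / (q : ℝ) ^ S.card)
    (α : Finset (Fin n) → {M // M ∈ C} → ℝ)
    (hzero : ∀ (S : Finset (Fin n)) (M : {M // M ∈ C}), S ∈ M.1 → α S M = 0)
    (Y : Finset (Fin n → Fin q))
    (Γ : Matrix {z : {M // M ∈ C} × (Fin n → Fin q) // z.2 ∈ XM z.1} {y // y ∈ Y} ℝ)
    (hΓ : Γ = Matrix.of fun z y =>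
      Real.sqrt ((q : ℝ) ^ n / ((XM z.1.1).card : ℝ)) *
        ∑ S : Finset (Fin n), α S z.1.1 * ES q n S z.1.2 y.1) :
    Real.sqrt (((Y.card : ℝ) / (q : ℝ) ^ n) * ∑ M : {M // M ∈ C}, (α ∅ M) ^ 2) ≤
      specNorm Γ :=
  gamma_norm_lower_bound_general n q C hMup XM hXM horth α hzero Y Γ hΓ
end

section
/- Let q ≥ 2 and n ≥ 1 be integers, let A ⊆ [n] be non-empty with |A| = k, let T be an orthogonal array of size q^{k−1} on A, and let X = {x ∈ [q]^n : x_A ∈ T}. Then |X| = q^{n−1}, and for every S ⊆ [n] that does not contain A and every z ∈ [q]^S, the number of x ∈ X with x_S = z equals q^{n−1−|S|} = |X|/q^{|S|}. -/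
/-!
Pick a coordinate `i ∈ A` outside `S`. By the orthogonal-array property, every assignment of the
coordinates other than `i` extends in exactly one way to a point of `X`, so the points of `X`
with `x_S = z` correspond to the free assignments of the `n - 1 - |S|` coordinates outside
`S ∪ {i}`.
-/

/-- `T` is an orthogonal array of size `q^(|A|-1)` on the index set `A`:
for every coordinate `i ∈ A` and every assignment of values to the other
coordinates, exactly one value of coordinate `i` yields an element of `T`. -/
def IsOA {n : ℕ} (q : ℕ) (A : Finset (Fin n)) (T : Finset ({i // i ∈ A} → Fin q)) : Prop :=
  ∀ (i : {i // i ∈ A}) (z : {i // i ∈ A} → Fin q), ∃! v : Fin q, Function.update z i v ∈ T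

open Finset Function

variable {ι α : Type*} [Fintype ι] [DecidableEq ι] [Fintype α]

theorem card_filter_of_existsUnique_update [Nonempty α] (P : (ι → α) → Prop) [DecidablePred P]
    (i : ι) (hP : ∀ x, ∃! v, P (update x i v)) :
    #{x | P x} = Fintype.card α ^ (Fintype.card ι - 1) := by
  have hcard : Fintype.card ({j // j ≠ i} → α) = Fintype.card α ^ (Fintype.card ι - 1) := by
    simp [Fintype.card_subtype_compl]
  rw [← hcard, ← card_univ]
  refine card_bij (fun x _ j => x j) (fun _ _ => mem_univ _) ?inj ?surj
  case inj =>
    intro x hx x' hx' hxx'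
    simp only [mem_filter, mem_univ, true_and] at hx hx'
    have hoff : ∀ j, j ≠ i → x j = x' j := fun j hj => congrFun hxx' ⟨j, hj⟩
    have hx'_eq : x' = update x i (x' i) := by
      ext j
      by_cases hj : j = i
      · subst hj; simp
      · simp [hj, hoff j hj]
    have hi : x i = x' i := (hP x).unique (by simpa using hx) (hx'_eq ▸ hx')
    ext j
    by_cases hj : j = i
    · subst hj; exact hi
    · exact hoff j hj
  case surj =>
    intro y _
    obtain ⟨a⟩ := ‹Nonempty α›
    let x := (Equiv.funSplitAt i α).symm (a, y)
    obtain ⟨v, hv, -⟩ := hP x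
    refine ⟨update x i v, by simpa using hv, ?_⟩
    ext ⟨j, hj⟩
    simp [x, hj]

variable [DecidableEq α]

theorem card_filter_forall_eq_eq_card_filter_compl (P : (ι → α) → Prop) [DecidablePred P]
    (S : Finset ι) (z : S → α) :
    #{x ∈ {x | P x} | ∀ j : S, x j = z j} =
      #{y | P ((Equiv.piEquivPiSubtypeProd (· ∈ S) fun _ => α).symm (z, y))} := by
  have hext : ∀ x : ι → α, (∀ j : S, x j = z j) →
      (Equiv.piEquivPiSubtypeProd (· ∈ S) fun _ => α).symm (z, fun j => x j) = x := by
    intro x hx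
    ext j
    by_cases hj : j ∈ S
    · simp [hj, hx ⟨j, hj⟩]
    · simp [hj]
  refine card_nbij' (fun x j => x j) (fun y => (Equiv.piEquivPiSubtypeProd _ _).symm (z, y))
    (fun x hx => ?_) (fun y hy => ?_) (fun x hx => ?_) (fun y _ => ?_)
  · simp only [coe_filter, mem_filter, mem_univ, true_and, Set.mem_ofPred_eq] at hx ⊢
    rw [hext x hx.2]; exact hx.1
  · simp only [coe_filter, mem_filter, mem_univ, true_and, Set.mem_ofPred_eq] at hy ⊢
    exact ⟨hy, fun j => by simp [j.2]⟩
  · simp only [coe_filter, mem_filter, mem_univ, true_and, Set.mem_ofPred_eq] at hx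
    exact hext x hx.2
  · ext ⟨j, hj⟩
    simp [hj]

theorem card_filter_forall_eq_of_existsUnique_update [Nonempty α] (P : (ι → α) → Prop)
    [DecidablePred P] (S : Finset ι) (z : S → α) {i : ι} (hi : i ∉ S)
    (hP : ∀ x, ∃! v, P (update x i v)) :
    #{x ∈ {x | P x} | ∀ j : S, x j = z j} = Fintype.card α ^ (Fintype.card ι - 1 - #S) := by
  let e := Equiv.piEquivPiSubtypeProd (· ∈ S) fun _ => α
  have he : ∀ y v, e.symm (z, update y ⟨i, hi⟩ v) = update (e.symm (z, y)) i v := by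
    intro y v
    ext j
    by_cases hj : j = i
    · subst hj; simp [e, hi]
    · by_cases hjS : j ∈ S <;> simp [e, hj, hjS]
  rw [card_filter_forall_eq_eq_card_filter_compl, card_filter_of_existsUnique_update
    (fun y => P (e.symm (z, y))) ⟨i, hi⟩ fun y => by simpa only [he] using hP (e.symm (z, y))]
  simp [Fintype.card_subtype_compl, Nat.sub_right_comm]

theorem IsOA.existsUnique_update {n q : ℕ} {A : Finset (Fin n)} {T : Finset (A → Fin q)}
    (hT : IsOA q A T) {i : Fin n} (hi : i ∈ A) (x : Fin n → Fin q) :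
    ∃! v, (fun j : A => update x i v j) ∈ T := by
  simpa only [← update_comp_eq_of_injective' x Subtype.val_injective ⟨i, hi⟩] using
    hT ⟨i, hi⟩ fun j => x j

theorem orthogonal_array_fibers_general (q n : ℕ) (hq : 2 ≤ q)
    (A : Finset (Fin n)) (hA : A.Nonempty)
    (T : Finset ({i // i ∈ A} → Fin q)) (hT : IsOA q A T) :
    (Finset.univ.filter fun x : Fin n → Fin q =>
        (fun i : {i // i ∈ A} => x i.1) ∈ T).card = q ^ (n - 1) ∧
    ∀ S : Finset (Fin n), ¬A ⊆ S → ∀ z : {i // i ∈ S} → Fin q,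
      ((Finset.univ.filter fun x : Fin n → Fin q =>
          (fun i : {i // i ∈ A} => x i.1) ∈ T).filter
        fun x => ∀ i : {i // i ∈ S}, x i.1 = z i).card = q ^ (n - 1 - S.card) := by
  have : Nonempty (Fin q) := ⟨⟨0, by omega⟩⟩
  let P (x : Fin n → Fin q) : Prop := (fun j : A => x j) ∈ T
  refine ⟨?_, fun S hAS z => ?_⟩
  · obtain ⟨i, hi⟩ := hA
    simpa using card_filter_of_existsUnique_update P i (hT.existsUnique_update hi)
  · obtain ⟨i, hiA, hiS⟩ := not_subset.mp hAS
    simpa using card_filter_forall_eq_of_existsUnique_update P S z hiS (hT.existsUnique_update hiA)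

/-- For an orthogonal array `T` on `A` and `X = {x ∈ [q]^n : x_A ∈ T}`,
one has `|X| = q^{n-1}`, and for every `S` not containing `A` the fibers of the
projection of `X` to the coordinates of `S` all have size `q^{n-1-|S|}`. -/
theorem orthogonal_array_fibers (q n : ℕ) (hq : 2 ≤ q) (hn : 1 ≤ n)
    (A : Finset (Fin n)) (hA : A.Nonempty)
    (T : Finset ({i // i ∈ A} → Fin q)) (hT : IsOA q A T) :
    (Finset.univ.filter fun x : Fin n → Fin q =>
        (fun i : {i // i ∈ A} => x i.1) ∈ T).card = q ^ (n - 1) ∧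
    ∀ S : Finset (Fin n), ¬A ⊆ S → ∀ z : {i // i ∈ S} → Fin q,
      ((Finset.univ.filter fun x : Fin n → Fin q =>
          (fun i : {i // i ∈ A} => x i.1) ∈ T).filter
        fun x => ∀ i : {i // i ∈ S}, x i.1 = z i).card = q ^ (n - 1 - S.card) :=
  orthogonal_array_fibers_general q n hq A hA T hT
end

section
/- Let q ≥ 2 and n ≥ 1 be integers, let A ⊆ [n] be non-empty, let a ∈ A, let T be an orthogonal array of size q^{|A|−1} on A, and let X = {x ∈ [q]^n : x_A ∈ T}. For S ⊆ [n] let E_S[X,·] denote the X × [q]^n submatrix of E_S formed by the rows indexed by X. Then for all S, S' ⊆ [n] with a ∉ S and a ∉ S', the matrix (E_S[X,·])ᵀ(E_{S'}[X,·]) equals (1/q)·E_S if S = S', and equals the zero matrix otherwise. -/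
open Matrix

section PiMatrix

variable {ι α R : Type*} [Fintype ι] [CommSemiring R]

/-- The tensor product `⨂ⱼ M j`, as a matrix indexed by `ι → α`. -/
def piMatrix (M : ι → Matrix α α R) : Matrix (ι → α) (ι → α) R :=
  Matrix.of fun x y => ∏ j, M j (x j) (y j)

theorem piMatrix_mul [DecidableEq ι] [Fintype α] (M N : ι → Matrix α α R) :
    piMatrix M * piMatrix N = piMatrix fun j => M j * N j := by
  ext y z
  simp only [piMatrix, mul_apply, of_apply, ← Finset.prod_mul_distrib]
  exact (Fintype.prod_sum fun j v => M j (y j) v * N j v (z j)).symm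

theorem piMatrix_eq_zero_of_eq_zero {M : ι → Matrix α α R} {j : ι} (hj : M j = 0) : piMatrix M = 0 := by
  ext x y
  exact Finset.prod_eq_zero (Finset.mem_univ j) (by simp [hj])

end PiMatrix

noncomputable def avgMatrix (q : ℕ) : Matrix (Fin q) (Fin q) ℝ :=
  Matrix.of fun _ _ => 1 / q

theorem isIdempotentElem_avgMatrix (q : ℕ) : IsIdempotentElem (avgMatrix q) := by
  ext u v
  simp only [avgMatrix, mul_apply, of_apply, Finset.sum_const, Finset.card_univ,
    Fintype.card_fin, nsmul_eq_mul, one_div]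
  -- `q⁻¹ * (q * q⁻¹) = q⁻¹` holds in `ℝ` also for `q = 0`
  rw [mul_left_comm]
  simpa [mul_assoc] using mul_inv_mul_cancel ((q : ℝ)⁻¹)

theorem ES_eq_piMatrix (q n : ℕ) (S : Finset (Fin n)) :
    ES q n S = piMatrix fun j => if j ∈ S then 1 - avgMatrix q else avgMatrix q := by
  ext x y
  simp only [ES, piMatrix, avgMatrix, of_apply]
  refine Finset.prod_congr rfl fun j _ => ?_
  split_ifs <;> simp [one_apply, *]

theorem ES_mul_ES (q n : ℕ) (S S' : Finset (Fin n)) :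
    ES q n S * ES q n S' = if S = S' then ES q n S else 0 := by
  have hP := isIdempotentElem_avgMatrix q
  rw [ES_eq_piMatrix, ES_eq_piMatrix, piMatrix_mul]
  split_ifs with hSS
  · subst hSS
    congr 1
    ext1 j
    split_ifs
    exacts [hP.one_sub.eq, hP.eq]
  · obtain ⟨j, hj⟩ : ∃ j, ¬(j ∈ S ↔ j ∈ S') := by
      by_contra! h
      exact hSS (Finset.ext h)
    apply piMatrix_eq_zero_of_eq_zero (j := j)
    by_cases hjS : j ∈ S <;> simp_all [hP.mul_one_sub_self, hP.one_sub_mul_self]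

theorem ES_transpose (q n : ℕ) (S : Finset (Fin n)) : (ES q n S)ᵀ = ES q n S := by
  ext x y
  simp only [ES, transpose_apply, of_apply, eq_comm]

theorem ES_update_apply {q n : ℕ} {S : Finset (Fin n)} {a : Fin n} (ha : a ∉ S)
    (x y : Fin n → Fin q) (v : Fin q) :
    ES q n S (Function.update x a v) y = ES q n S x y := by
  simp only [ES, of_apply]
  refine Finset.prod_congr rfl fun j _ => ?_
  by_cases hj : j = a
  · subst hj; simp [ha]
  · rw [Function.update_of_ne hj]

section Transversal

variable {ι α M : Type*} [DecidableEq ι] [Fintype ι] [Fintype α] [AddCommMonoid M]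

theorem sum_eq_card_smul_sum_of_existsUnique_update {X : Finset (ι → α)} {a : ι}
    (hX : ∀ y, ∃! v, Function.update y a v ∈ X) {g : (ι → α) → M}
    (hg : ∀ x v, g (Function.update x a v) = g x) :
    ∑ y, g y = Fintype.card α • ∑ x ∈ X, g x := by
  let φ : α × X → (ι → α) := fun p => Function.update p.2.1 a p.1
  have hφ : Function.Bijective φ := by
    constructor
    · rintro ⟨v, x, hx⟩ ⟨v', x', hx'⟩ h
      have hv : v = v' := by simpa [φ] using congrFun h a
      -- `x` and `x'` lie on the same line in direction `a`, which meets `X` only once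
      have hx'_eq : Function.update x a (x' a) = x' := by
        simpa [φ] using congrArg (Function.update · a (x' a)) h
      have hxa : x a = x' a := (hX x).unique (by rwa [Function.update_eq_self])
        (by rwa [hx'_eq])
      have hxx' : x = x' := by rw [← hx'_eq, ← hxa, Function.update_eq_self]
      subst hv hxx'
      rfl
    · intro y
      obtain ⟨v, hv, -⟩ := hX y
      exact ⟨⟨y a, Function.update y a v, hv⟩, by simp [φ]⟩
  calc ∑ y, g y = ∑ p : α × X, g (φ p) := (Fintype.sum_bijective φ hφ _ _ fun _ => rfl).symm
    _ = Fintype.card α • ∑ x ∈ X, g x := by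
      simp only [φ, hg, Fintype.sum_prod_type, Finset.sum_const, Finset.card_univ,
        Finset.sum_coe_sort X g]

end Transversal

theorem existsUnique_update_mem_of_isOA {q n : ℕ} {A : Finset (Fin n)} {a : Fin n} (ha : a ∈ A)
    {T : Finset ({i // i ∈ A} → Fin q)} (hT : IsOA q A T) (y : Fin n → Fin q) :
    ∃! v, Function.update y a v ∈ Finset.univ.filter fun x : Fin n → Fin q =>
      (fun i : {i // i ∈ A} => x i.1) ∈ T := by
  have hrestrict : ∀ v, (fun i : {i // i ∈ A} => Function.update y a v i.1) =
      Function.update (fun i : {i // i ∈ A} => y i.1) ⟨a, ha⟩ v := by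
    intro v
    funext i
    by_cases hi : (i : Fin n) = a
    · obtain rfl : i = ⟨a, ha⟩ := Subtype.ext hi
      simp
    · rw [Function.update_of_ne hi, Function.update_of_ne (fun h => hi (by rw [h]))]
  simpa only [Finset.mem_filter, Finset.mem_univ, true_and, hrestrict] using hT ⟨a, ha⟩ _

theorem ES_submatrix_orthogonality_general (q n : ℕ) (hq : 2 ≤ q)
    (A : Finset (Fin n)) (a : Fin n) (ha : a ∈ A)
    (T : Finset ({i // i ∈ A} → Fin q)) (hT : IsOA q A T)
    (X : Finset (Fin n → Fin q))
    (hX : X = Finset.univ.filter fun x : Fin n → Fin q =>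
      (fun i : {i // i ∈ A} => x i.1) ∈ T)
    (S S' : Finset (Fin n)) (hS : a ∉ S) (hS' : a ∉ S') :
    (Matrix.of fun (x : {x // x ∈ X}) (y : Fin n → Fin q) => ES q n S x.1 y)ᵀ *
      (Matrix.of fun (x : {x // x ∈ X}) (y : Fin n → Fin q) => ES q n S' x.1 y) =
    if S = S' then ((q : ℝ))⁻¹ • ES q n S else 0 := by
  have hq0 : (q : ℝ) ≠ 0 := Nat.cast_ne_zero.2 (by omega)
  have hRHS : (if S = S' then ((q : ℝ))⁻¹ • ES q n S else 0) =
      (q : ℝ)⁻¹ • ((ES q n S)ᵀ * ES q n S') := by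
    rw [ES_transpose, ES_mul_ES]
    split_ifs <;> simp
  ext y z
  have hsum := sum_eq_card_smul_sum_of_existsUnique_update
    (hX ▸ existsUnique_update_mem_of_isOA ha hT) (g := fun x => ES q n S x y * ES q n S' x z)
    (fun x v => by simp only [ES_update_apply hS, ES_update_apply hS'])
  rw [hRHS, Matrix.smul_apply, mul_apply, mul_apply]
  simp only [transpose_apply, of_apply, hsum,
    Finset.sum_coe_sort X fun x => ES q n S x y * ES q n S' x z]
  simp [hq0]

/-- For `X` defined by an orthogonal array on `A`, `a ∈ A`, and `S, S'` omitting
`a`, one has `(E_S[X,·])ᵀ(E_{S'}[X,·]) = (1/q)·E_S` if `S = S'` and `= 0`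
otherwise. -/
theorem ES_submatrix_orthogonality (q n : ℕ) (hq : 2 ≤ q) (hn : 1 ≤ n)
    (A : Finset (Fin n)) (hA : A.Nonempty) (a : Fin n) (ha : a ∈ A)
    (T : Finset ({i // i ∈ A} → Fin q)) (hT : IsOA q A T)
    (X : Finset (Fin n → Fin q))
    (hX : X = Finset.univ.filter fun x : Fin n → Fin q =>
      (fun i : {i // i ∈ A} => x i.1) ∈ T)
    (S S' : Finset (Fin n)) (hS : a ∉ S) (hS' : a ∉ S') :
    (Matrix.of fun (x : {x // x ∈ X}) (y : Fin n → Fin q) => ES q n S x.1 y)ᵀ *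
      (Matrix.of fun (x : {x // x ∈ X}) (y : Fin n → Fin q) => ES q n S' x.1 y) =
    if S = S' then ((q : ℝ))⁻¹ • ES q n S else 0 :=
  ES_submatrix_orthogonality_general q n hq A a ha T hT X hX S S' hS hS'
end

section
/- For every real δ with 0 < δ < 1, every ε > 0, and every positive integer N, there exist an integer p ≥ N and a subset U ⊆ ℤ_p such that ||U|/p − δ| ≤ ε and ‖U‖_u ≤ ε. -/
/-!
Take a prime `p ≡ 1 (mod n)`, let `H` be the subgroup of `n`-th powers in `(ℤ/p)ˣ` (of index `n`)
and let `U` be a union of `m ≈ δ n` cosets of `H`. Then `#U/p ≈ δ` up to `1/n + 1/p`. Since `U` is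
`H`-invariant, its Fourier coefficient `S(a) = ∑_{u ∈ U} e(au/p)` is constant on the coset `aH`,
so Parseval `∑_a |S(a)|² = p #U` gives `#H |S(a)|² ≤ p #U = p m #H` for `a ≠ 0`, that is
`|S(a)| ≤ √(m p)` and `‖U‖_u ≤ √(n/p)`.
-/

/-- The Fourier bias of a subset `U ⊆ ℤ_p`:
`‖U‖_u = (1/p)·max_{a ≠ 0} |Σ_{u∈U} exp(2πi a u/p)|`. -/
noncomputable def fourierBias (p : ℕ) (U : Finset (ZMod p)) : ℝ :=
  (1 / p) * ⨆ a : {a : ZMod p // a ≠ 0},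
    ‖∑ u ∈ U, Complex.exp (2 * (Real.pi : ℂ) * Complex.I *
      (((a.1.val : ℕ) : ℂ) * ((u.val : ℕ) : ℂ)) / (p : ℂ))‖

open Finset

namespace AddChar

variable {R : Type*} [CommRing R] [Fintype R] {ψ : AddChar R ℂ}

theorem sum_norm_sq_sum_mul_eq (hψ : ψ.IsPrimitive) (V : Finset R) :
    ∑ b : R, ‖∑ x ∈ V, ψ (b * x)‖ ^ 2 = Fintype.card R * #V := by
  classical
  have hsq (z : ℂ) : (‖z‖ : ℂ) ^ 2 = z * (starRingEnd ℂ) z := by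
    rw [Complex.mul_conj, Complex.normSq_eq_norm_sq]
    push_cast
    rfl
  apply Complex.ofReal_injective
  push_cast
  simp_rw [hsq, map_sum, ← map_neg_eq_conj, sum_mul_sum, ← map_add_eq_mul, ← mul_neg, ← mul_add]
  rw [sum_comm]
  refine (sum_congr rfl fun x _ ↦ sum_comm).trans ?_
  simp_rw [sum_mulShift _ hψ, add_neg_eq_zero]
  simp [mul_comm]

theorem card_mul_norm_sq_sum_mul_le (hψ : ψ.IsPrimitive) {H : Subgroup Rˣ} {V : Finset R}
    (hV : ∀ x ∈ V, ∀ h ∈ H, x * h ∈ V) (a : Rˣ) :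
    Nat.card H * ‖∑ x ∈ V, ψ (a * x)‖ ^ 2 ≤ Fintype.card R * #V := by
  classical
  set S : R → ℝ := fun b ↦ ‖∑ x ∈ V, ψ (b * x)‖ ^ 2
  have hS_mul (h : H) : S (a * (h : Rˣ)) = S a := by
    have : ∑ x ∈ V, ψ (a * (h : Rˣ) * x) = ∑ x ∈ V, ψ (a * x) :=
      sum_nbij' (fun x ↦ x * (h : Rˣ)) (fun x ↦ x * ((h⁻¹ : H) : Rˣ))
        (fun x hx ↦ hV x hx h h.2) (fun x hx ↦ hV x hx _ (h⁻¹).2)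
        (fun x _ ↦ by simp [mul_assoc]) (fun x _ ↦ by simp [mul_assoc]) (fun x _ ↦ by ring_nf)
    simp only [S, this]
  have hinj : Function.Injective fun h : H ↦ (a : R) * (h : Rˣ) := fun h k hhk ↦
    Subtype.ext <| Units.ext <| (Units.mul_right_inj a).mp hhk
  calc (Nat.card H : ℝ) * S a = ∑ h : H, S (a * (h : Rˣ)) := by
        simp [hS_mul, Nat.card_eq_fintype_card]
    _ = ∑ b ∈ univ.map ⟨_, hinj⟩, S b := by rw [sum_map]; rfl
    _ ≤ ∑ b : R, S b := sum_le_univ_sum_of_nonneg fun _ ↦ by positivity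
    _ = Fintype.card R * #V := sum_norm_sq_sum_mul_eq hψ V

end AddChar

theorem Subgroup.exists_finset_card_eq_mul_card_of_mul_mem {G : Type*} [Group G] [Finite G]
    (H : Subgroup G) {m : ℕ} (hm : m ≤ H.index) :
    ∃ V : Finset G, #V = m * Nat.card H ∧ ∀ x ∈ V, ∀ h ∈ H, x * h ∈ V := by
  classical
  have := Fintype.ofFinite G
  obtain ⟨T, -, hT⟩ := exists_subset_card_eq (s := (univ : Finset (G ⧸ H))) (n := m)
    (by rwa [card_univ, ← Nat.card_eq_fintype_card, ← Subgroup.index])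
  refine ⟨univ.filter fun x ↦ (x : G ⧸ H) ∈ T, ?_, fun x hx h hh ↦ ?_⟩
  · have := QuotientGroup.card_preimage_mk H T
    rw [Nat.card_eq_card_toFinset, Nat.card_eq_card_toFinset] at this
    simpa [hT, mul_comm] using this
  · simpa [QuotientGroup.mk_mul_of_mem x hh] using hx

theorem AddChar.exists_finset_card_and_norm_sum_mul_le {F : Type*} [Field F] [Fintype F]
    {ψ : AddChar F ℂ} (hψ : ψ.IsPrimitive) {n m : ℕ} (hn : n ∣ Fintype.card F - 1)
    (hm : m ≤ n) : ∃ U : Finset F, n * #U = m * (Fintype.card F - 1) ∧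
      ∀ a : F, a ≠ 0 → ‖∑ u ∈ U, ψ (a * u)‖ ≤ √(m * Fintype.card F) := by
  set H := (powMonoidHom n : Fˣ →* Fˣ).range
  have hcard : Nat.card Fˣ = Fintype.card F - 1 := by
    rw [Nat.card_units, Nat.card_eq_fintype_card]
  have hH_index : H.index = n := by
    rw [IsCyclic.index_powMonoidHom_range, hcard, Nat.gcd_eq_right hn]
  have hH_card : Nat.card H * n = Fintype.card F - 1 := by
    rw [← hH_index, Subgroup.card_mul_index, hcard]
  obtain ⟨V, hV_card, hV⟩ := H.exists_finset_card_eq_mul_card_of_mul_mem (hm.trans_eq hH_index.symm)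
  set U := V.map ⟨Units.val, Units.val_injective⟩
  have hU : ∀ x ∈ U, ∀ h ∈ H, x * h ∈ U := by
    simp only [U, mem_map, Function.Embedding.coeFn_mk, forall_exists_index, and_imp]
    rintro _ v hv rfl h hh
    exact ⟨v * h, hV v hv h hh, rfl⟩
  refine ⟨U, by rw [card_map, hV_card, ← hH_card]; ring, fun a ha ↦ ?_⟩
  have hbound := card_mul_norm_sq_sum_mul_le hψ hU (Units.mk0 a ha)
  rw [card_map, hV_card, Units.val_mk0] at hbound
  refine Real.le_sqrt_of_sq_le (le_of_mul_le_mul_left ?_ (Nat.cast_pos.mpr (Nat.card_pos (α := H))))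
  push_cast at hbound
  linarith

theorem fourierBias_le_of_norm_sum_le {p : ℕ} [NeZero p] {U : Finset (ZMod p)} {B : ℝ} (hB : 0 ≤ B)
    (hU : ∀ a : ZMod p, a ≠ 0 → ‖∑ u ∈ U, ZMod.stdAddChar (a * u)‖ ≤ B) :
    fourierBias p U ≤ B / p := by
  have hexp (a u : ZMod p) : Complex.exp (2 * (Real.pi : ℂ) * Complex.I *
      (((a.val : ℕ) : ℂ) * ((u.val : ℕ) : ℂ)) / (p : ℂ)) = ZMod.stdAddChar (a * u) := by
    have h : a * u = ((a.val * u.val : ℕ) : ZMod p) := by simp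
    rw [h, ZMod.stdAddChar_apply, ZMod.toCircle_natCast]
    push_cast
    ring_nf
  rw [fourierBias, one_div_mul_eq_div]
  gcongr
  exact Real.iSup_le (fun a ↦ by simpa only [hexp] using hU a a.2) hB

theorem abs_natFloor_mul_div_sub_le {δ : ℝ} (hδ : 0 ≤ δ) {n : ℕ} (hn : 0 < n) :
    |(⌊δ * n⌋₊ : ℝ) / n - δ| ≤ 1 / n := by
  have hn' : (0 : ℝ) < n := Nat.cast_pos.mpr hn
  have h : (⌊δ * n⌋₊ : ℝ) / n - δ = (⌊δ * n⌋₊ - δ * n) / n := by field_simp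
  rw [h, abs_div, abs_of_pos hn', div_le_div_iff_of_pos_right hn', abs_le]
  have := Nat.floor_le (mul_nonneg hδ hn'.le)
  have := Nat.lt_floor_add_one (δ * n)
  constructor <;> linarith

theorem abs_div_sub_le_of_mul_eq_mul_sub_one {u m n p : ℕ} (hn : 0 < n) (hp : 0 < p)
    (hmn : m ≤ n) (h : n * u = m * (p - 1)) (δ : ℝ) :
    |(u : ℝ) / p - δ| ≤ |(m : ℝ) / n - δ| + 1 / p := by
  have hn' : (0 : ℝ) < n := Nat.cast_pos.mpr hn
  have hp' : (0 : ℝ) < p := Nat.cast_pos.mpr hp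
  have hcast : (n : ℝ) * u = m * (p - 1) := by rw [← Nat.cast_pred hp]; exact_mod_cast h
  have hu : (u : ℝ) / p = m / n - m / n / p := by
    field_simp
    linear_combination hcast
  have hmnp : (m : ℝ) / n / p ≤ 1 / p := by
    gcongr
    exact div_le_one_of_le₀ (by exact_mod_cast hmn) hn'.le
  calc |(u : ℝ) / p - δ| = |(m / n - δ) - m / n / p| := by rw [hu]; ring_nf
    _ ≤ |(m : ℝ) / n - δ| + |(m : ℝ) / n / p| := abs_sub _ _
    _ ≤ |(m : ℝ) / n - δ| + 1 / p := by
        rw [abs_of_nonneg (by positivity : (0 : ℝ) ≤ m / n / p)]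
        gcongr

theorem ZMod.exists_finset_abs_card_div_sub_le_and_fourierBias_le {p n : ℕ} [Fact p.Prime]
    (hn : n ∣ p - 1) {δ : ℝ} (hδ0 : 0 ≤ δ) (hδ1 : δ ≤ 1) :
    ∃ U : Finset (ZMod p), |(#U : ℝ) / p - δ| ≤ 1 / n + 1 / p ∧ fourierBias p U ≤ √(n / p) := by
  have hp : p.Prime := Fact.out
  have hn0 : 0 < n := Nat.pos_of_dvd_of_pos hn (Nat.sub_pos_of_lt hp.one_lt)
  have hp' : (0 : ℝ) < p := Nat.cast_pos.mpr hp.pos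
  have hmn : ⌊δ * n⌋₊ ≤ n := Nat.floor_le_of_le (mul_le_of_le_one_left n.cast_nonneg hδ1)
  obtain ⟨U, hU_card, hU_sum⟩ := AddChar.exists_finset_card_and_norm_sum_mul_le
    (ZMod.isPrimitive_stdAddChar p) (by rwa [ZMod.card]) hmn
  rw [ZMod.card] at hU_card hU_sum
  refine ⟨U, ?_, (fourierBias_le_of_norm_sum_le (Real.sqrt_nonneg _) hU_sum).trans ?_⟩
  · linarith [abs_div_sub_le_of_mul_eq_mul_sub_one hn0 hp.pos hmn hU_card δ,
      abs_natFloor_mul_div_sub_le hδ0 hn0]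
  · calc √(⌊δ * n⌋₊ * p) / p ≤ √(n * p) / p := by gcongr
      _ = √(n / p) := by
        rw [Real.sqrt_div' _ hp'.le, Real.sqrt_mul' _ hp'.le,
          div_eq_div_iff hp'.ne' (Real.sqrt_pos.mpr hp').ne', mul_assoc, Real.mul_self_sqrt hp'.le]

/-- There exist arbitrarily large moduli `p` and subsets `U ⊆ ℤ_p` of any
prescribed density with arbitrarily small Fourier bias. -/
theorem exists_subset_small_fourier_bias (δ ε : ℝ) (hδ0 : 0 < δ) (hδ1 : δ < 1)
    (hε : 0 < ε) (N : ℕ) :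
    ∃ p : ℕ, N ≤ p ∧ 0 < p ∧ ∃ U : Finset (ZMod p),
      |((U.card : ℝ) / (p : ℝ)) - δ| ≤ ε ∧ fourierBias p U ≤ ε := by
  obtain ⟨k, hk⟩ := exists_nat_one_div_lt (half_pos hε)
  set n := k + 1
  obtain ⟨p, hp, hp_gt, hp_mod⟩ :=
    Nat.exists_prime_gt_modEq_one (N + n + ⌈n / ε ^ 2⌉₊) k.succ_ne_zero
  have := Fact.mk hp
  obtain ⟨U, hU_density, hU_bias⟩ := ZMod.exists_finset_abs_card_div_sub_le_and_fourierBias_le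
    ((Nat.modEq_iff_dvd' hp.one_le).mp hp_mod.symm) hδ0.le hδ1.le
  have hp' : (0 : ℝ) < p := Nat.cast_pos.mpr hp.pos
  have hnp : (n : ℝ) ≤ p := by exact_mod_cast (by omega : n ≤ p)
  have hnε : (n : ℝ) / ε ^ 2 ≤ p :=
    (Nat.le_ceil _).trans (Nat.cast_le.mpr (by omega : ⌈(n : ℝ) / ε ^ 2⌉₊ ≤ p))
  refine ⟨p, by omega, hp.pos, U, hU_density.trans ?_, hU_bias.trans ?_⟩
  · have : 1 / (p : ℝ) ≤ 1 / n := one_div_le_one_div_of_le (by positivity) hnp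
    push_cast [n] at hk this ⊢
    linarith
  · rw [Real.sqrt_le_left hε.le, div_le_iff₀ hp']
    rwa [div_le_iff₀ (by positivity), mul_comm] at hnε
end
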